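/- Let c = t_1 t_2 ⋯ t_{n−1} be any factorization of the long cycle c ∈ S_n into transpositions. Then: (i) for every subset I ⊆ {1,…,n−1} the set {t_i : i ∈ I} has a least upper bound w_I in the poset (NC(S_n), ≤); (ii) the assignment I ↦ w_I is injective and order-preserving (I ⊆ J implies w_I ≤ w_J), with w_∅ = id and w_{{1,…,n−1}} = c; (iii) w_{{1,…,k}} = t_1 t_2 ⋯ t_k for every 1 ≤ k ≤ n−1; (iv) the image {w_I : I ⊆ {1,…,n−1}}, with the order induced from absolute order, is order-isomorphic to the Boolean lattice of all subsets of {1,…,n−1}. -/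

import Mathlib

namespace NCPaper

variable {G : Type*} [Group G]

/-- `lenT T w` is the least `k` such that `w` is a product of `k` elements of `T`
(the reflection length with respect to `T`). -/
noncomputable def lenT (T : Set G) (w : G) : ℕ :=
  sInf {k | ∃ l : List G, (∀ t ∈ l, t ∈ T) ∧ l.length = k ∧ l.prod = w}

/-- The absolute order with respect to the generating set `T`. -/
def absLe (T : Set G) (v w : G) : Prop :=
  lenT T w = lenT T v + lenT T (v⁻¹ * w)

/-- Strict absolute order. -/
def absLt (T : Set G) (v w : G) : Prop := absLe T v w ∧ v ≠ w

/-- The noncrossing partition lattice `NC(W, c)`: the interval `[1, c]` in absolute order. -/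
def NC (T : Set G) (c : G) : Set G := {w | absLe T w c}

/-- A maximal chain `(w_0, …, w_k)` in `NC(W, c)`. -/
def IsNCMaxChain (T : Set G) (c : G) {k : ℕ} (w : Fin (k+1) → G) : Prop :=
  w 0 = 1 ∧ w (Fin.last k) = c ∧ (∀ i, w i ∈ NC T c) ∧
  (∀ i : Fin (k+1), lenT T (w i) = i.val) ∧
  ∀ i : Fin k, absLt T (w i.castSucc) (w i.succ)

/-- The Hurwitz graph: vertices are the maximal chains of `NC(W,c)`, and two chains are
adjacent iff they differ in exactly one entry. -/
def hurwitzGraph (T : Set G) (c : G) (k : ℕ) :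
    SimpleGraph {w : Fin (k+1) → G // IsNCMaxChain T c w} where
  Adj a b := ∃! i, a.1 i ≠ b.1 i
  symm := by
    constructor
    rintro a b ⟨i, hi, hu⟩
    exact ⟨i, hi.symm, fun j hj => hu j hj.symm⟩
  loopless := by constructor; rintro a ⟨i, hi, _⟩; exact hi rfl

/-- The set of transpositions (reflections) of the symmetric group `S_n`. -/
def ST (n : ℕ) : Set (Equiv.Perm (Fin n)) := {t | t.IsSwap}

end NCPaper
namespace NCPaper

variable {G : Type*} [Group G]

/-- `IsJoinIn T S A w`: `w` is the least upper bound of the set `A` inside the subposet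
`S` of the group, with respect to the absolute order determined by `T`. -/
def IsJoinIn (T : Set G) (S : Set G) (A : Set G) (w : G) : Prop :=
  w ∈ S ∧ (∀ a ∈ A, absLe T a w) ∧ ∀ u ∈ S, (∀ a ∈ A, absLe T a u) → absLe T w u

/-!
Reflection length in `S_n` is `n` minus the number of cycles: multiplying by a transposition
`(a b)` splits the cycle through `a` and `b`, or merges the two cycles containing them. Every
element below the long cycle `c` arises from `c` by cutting cycles along chords, so its cycles
run around the circle in increasing order and do not cross; for two such elements the absolute
order is refinement of cycle partitions.

Since `c = t₁ ⋯ t_{n-1}` is reduced, the product `w_I` of the `tᵢ` with `i ∈ I`, in their order,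
is reduced of length `|I|` and lies above each of these `tᵢ` and below `c`. An element `u` of
`NC(S_n)` above these `tᵢ` has the two points moved by each of them in one cycle, so the cycles of
`w_I` refine those of `u` and `w_I ≤ u`: `w_I` is the join. Comparing lengths, `w_I ≤ w_J` forces
`w_{I ∪ J} = w_J` and then `I ⊆ J`.
-/

section AbsoluteOrder

variable {T : Set G}

theorem lenT_le_length {l : List G} (hl : ∀ t ∈ l, t ∈ T) : lenT T l.prod ≤ l.length :=
  Nat.sInf_le ⟨l, hl, rfl, rfl⟩

theorem lenT_one : lenT T (1 : G) = 0 :=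
  Nat.le_zero.mp (lenT_le_length (l := []) (by simp))

theorem exists_list_length_eq_lenT (hT : Submonoid.closure T = ⊤) (w : G) :
    ∃ l : List G, (∀ t ∈ l, t ∈ T) ∧ l.length = lenT T w ∧ l.prod = w := by
  have hw : w ∈ Submonoid.closure T := hT ▸ Submonoid.mem_top w
  obtain ⟨l, hl, rfl⟩ := Submonoid.exists_list_of_mem_closure hw
  have hne : {k | ∃ l' : List G, (∀ t ∈ l', t ∈ T) ∧ l'.length = k ∧ l'.prod = l.prod}.Nonempty :=
    ⟨_, l, hl, rfl, rfl⟩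
  exact Nat.sInf_mem hne

theorem lenT_mul_le (hT : Submonoid.closure T = ⊤) (v w : G) :
    lenT T (v * w) ≤ lenT T v + lenT T w := by
  obtain ⟨lv, hlv, hv, rfl⟩ := exists_list_length_eq_lenT hT v
  obtain ⟨lw, hlw, hw, rfl⟩ := exists_list_length_eq_lenT hT w
  rw [← hv, ← hw, ← List.length_append, ← List.prod_append]
  exact lenT_le_length fun t ht => (List.mem_append.mp ht).elim (hlv t) (hlw t)

theorem eq_one_of_lenT_eq_zero (hT : Submonoid.closure T = ⊤) {w : G} (h : lenT T w = 0) :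
    w = 1 := by
  obtain ⟨l, -, hl, rfl⟩ := exists_list_length_eq_lenT hT w
  rw [List.eq_nil_of_length_eq_zero (hl.trans h), List.prod_nil]

theorem lenT_conj (hT : Submonoid.closure T = ⊤) (hconj : ∀ g, ∀ t ∈ T, g * t * g⁻¹ ∈ T)
    (g w : G) : lenT T (g * w * g⁻¹) = lenT T w := by
  have key : ∀ g w : G, lenT T (g * w * g⁻¹) ≤ lenT T w := fun g w => by
    obtain ⟨l, hl, hlen, rfl⟩ := exists_list_length_eq_lenT hT w
    have := lenT_le_length (T := T) (l := l.map (MulAut.conj g)) <| by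
      simpa using fun t ht => hconj g t (hl t ht)
    rwa [← map_list_prod, List.length_map, hlen] at this
  refine le_antisymm (key g w) ?_
  simpa [mul_assoc] using key g⁻¹ (g * w * g⁻¹)

theorem absLe_refl (w : G) : absLe T w w := by
  simp [absLe, lenT_one]

theorem one_absLe (w : G) : absLe T 1 w := by
  simp [absLe, lenT_one]

theorem absLe_trans (hT : Submonoid.closure T = ⊤) {u v w : G} (huv : absLe T u v)
    (hvw : absLe T v w) : absLe T u w := by
  unfold absLe at *
  have h₁ := lenT_mul_le hT (u⁻¹ * v) (v⁻¹ * w)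
  have h₂ := lenT_mul_le hT u (u⁻¹ * w)
  simp only [mul_assoc, mul_inv_cancel_left] at h₁ h₂
  omega

theorem absLe_antisymm (hT : Submonoid.closure T = ⊤) {v w : G} (hvw : absLe T v w)
    (hwv : absLe T w v) : v = w := by
  unfold absLe at *
  have := eq_one_of_lenT_eq_zero hT (w := v⁻¹ * w) (by omega)
  rwa [inv_mul_eq_one] at this

/-- Each deleted letter is moved to the right end, where it becomes a conjugate. -/
theorem exists_prod_eq_prod_mul_of_sublist (hconj : ∀ g, ∀ t ∈ T, g * t * g⁻¹ ∈ T)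
    {s l : List G} (hsl : s.Sublist l) (hl : ∀ t ∈ l, t ∈ T) :
    ∃ r : List G, (∀ t ∈ r, t ∈ T) ∧ s.length + r.length = l.length ∧ l.prod = s.prod * r.prod := by
  induction hsl with
  | slnil => exact ⟨[], by simp, rfl, by simp⟩
  | @cons s l a _ ih =>
    obtain ⟨r, hr, hlen, hprod⟩ := ih fun t ht => hl t (List.mem_cons_of_mem a ht)
    refine ⟨(s.prod⁻¹ * a * s.prod) :: r, ?_, by simp [← hlen]; omega, by simp [hprod, mul_assoc]⟩
    exact List.forall_mem_cons.mpr
      ⟨by simpa using hconj s.prod⁻¹ a (hl a List.mem_cons_self), hr⟩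
  | @cons_cons s l a _ ih =>
    obtain ⟨r, hr, hlen, hprod⟩ := ih fun t ht => hl t (List.mem_cons_of_mem a ht)
    exact ⟨r, hr, by simp [← hlen]; omega, by simp [hprod, mul_assoc]⟩

theorem lenT_prod_eq_and_absLe_of_sublist (hT : Submonoid.closure T = ⊤)
    (hconj : ∀ g, ∀ t ∈ T, g * t * g⁻¹ ∈ T) {s l : List G} (hsl : s.Sublist l)
    (hl : ∀ t ∈ l, t ∈ T) (hred : lenT T l.prod = l.length) :
    lenT T s.prod = s.length ∧ absLe T s.prod l.prod := by
  obtain ⟨r, hr, hlen, hprod⟩ := exists_prod_eq_prod_mul_of_sublist hconj hsl hl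
  have hs := lenT_le_length fun t ht => hl t (hsl.mem ht)
  have hr' := lenT_le_length hr
  have hmul := lenT_mul_le hT s.prod r.prod
  rw [← hprod] at hmul
  refine ⟨by omega, ?_⟩
  rw [absLe, hprod, inv_mul_cancel_left, ← hprod]
  omega

theorem exists_mem_absLe_mul (hT : Submonoid.closure T = ⊤) {v w : G} (hvw : absLe T v w)
    (hne : v ≠ w) : ∃ t ∈ T, lenT T (v * t) = lenT T v + 1 ∧ absLe T (v * t) w := by
  obtain ⟨l, hl, hlen, hprod⟩ := exists_list_length_eq_lenT hT (v⁻¹ * w)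
  obtain ⟨t, r, rfl⟩ := List.exists_cons_of_ne_nil (l := l) fun h => hne <| by
    rwa [h, List.prod_nil, eq_comm, inv_mul_eq_one] at hprod
  have htT := hl t List.mem_cons_self
  have hrest : (v * t)⁻¹ * w = r.prod := by
    rw [mul_inv_rev, mul_assoc, ← hprod, List.prod_cons, inv_mul_cancel_left]
  have hr := lenT_le_length fun s hs => hl s (List.mem_cons_of_mem t hs)
  have ht := lenT_le_length (T := T) (l := [t]) (by simpa using htT)
  have h₁ := lenT_mul_le hT v t
  have h₂ := lenT_mul_le hT (v * t) ((v * t)⁻¹ * w)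
  rw [mul_inv_cancel_left, hrest] at h₂
  rw [List.length_cons] at hlen
  rw [List.prod_singleton, List.length_singleton] at ht
  unfold absLe at hvw ⊢
  exact ⟨t, htT, by omega, by rw [hrest]; omega⟩

theorem absLe_of_absLe_mul_right (hT : Submonoid.closure T = ⊤)
    (hconj : ∀ g, ∀ t ∈ T, g * t * g⁻¹ ∈ T) {u v g : G} {k : ℕ}
    (h : absLe T (v * g) (u * g)) (hv : lenT T (v * g) + k = lenT T v)
    (hu : lenT T (u * g) + k = lenT T u) : absLe T v u := by
  have hc : (v * g)⁻¹ * (u * g) = g⁻¹ * (v⁻¹ * u) * g⁻¹⁻¹ := by group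
  unfold absLe at h ⊢
  rw [hc, lenT_conj hT hconj] at h
  omega

end AbsoluteOrder

section Cycles

open Equiv Equiv.Perm

variable {α : Type*}

/-- Fixed points count as cycles. -/
noncomputable def numCycles (f : Perm α) : ℕ := Nat.card (Quotient (SameCycle.setoid f))

theorem numCycles_one : numCycles (1 : Perm α) = Nat.card α :=
  Nat.card_congr (Equiv.ofBijective (Quotient.mk (SameCycle.setoid 1))
    ⟨fun _ _ h => sameCycle_one.mp (Quotient.exact h), Quotient.mk_surjective⟩).symm

theorem numCycles_le [Finite α] (f : Perm α) : numCycles f ≤ Nat.card α :=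
  Nat.card_le_card_of_surjective _ Quotient.mk_surjective

theorem mem_of_sameCycle_of_mapsTo [Finite α] {f : Perm α} {s : Set α} (hs : Set.MapsTo f s s)
    {x y : α} (hx : x ∈ s) (hxy : f.SameCycle x y) : y ∈ s := by
  obtain ⟨k, rfl⟩ := hxy.exists_nat_pow_eq
  rw [coe_pow]
  exact hs.iterate k hx

theorem sameCycle_of_forall_sameCycle_apply [Finite α] {f g : Perm α}
    (h : ∀ z, f.SameCycle z (g z)) {x y : α} (hxy : g.SameCycle x y) : f.SameCycle x y :=
  mem_of_sameCycle_of_mapsTo (s := {z | f.SameCycle x z}) (fun z hz => hz.trans (h z))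
    (SameCycle.refl f x) hxy

theorem sameCycle_list_prod_apply {u : Perm α} {l : List (Perm α)}
    (hl : ∀ σ ∈ l, ∀ z, u.SameCycle z (σ z)) (z : α) : u.SameCycle z (l.prod z) := by
  induction l with
  | nil => exact SameCycle.refl u z
  | cons σ l ih =>
    rw [List.prod_cons, Perm.mul_apply]
    exact (ih fun τ hτ => hl τ (List.mem_cons_of_mem σ hτ)).trans (hl σ List.mem_cons_self _)

theorem card_quotient_eq_add_one_of_split [Finite α] {r s : Setoid α} (hsr : s ≤ r) {a b : α}
    (hab : r a b) (hnab : ¬ s a b) (hsplit : ∀ x, r a x → s a x ∨ s b x)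
    (hout : ∀ x y, ¬ r a x → r x y → s x y) :
    Nat.card (Quotient s) = Nat.card (Quotient r) + 1 := by
  classical
  -- away from the class of `b`, the natural map from `s`-classes to `r`-classes is bijective
  let f : {q : Quotient s // q ≠ ⟦b⟧} → Quotient r := fun q => Quotient.map' id hsr q.1
  have hside : ∀ x, r a x → ⟦x⟧ ≠ (⟦b⟧ : Quotient s) → s a x := fun x hx hxb =>
    (hsplit x hx).resolve_right fun h => hxb (Quotient.sound (s.symm h))
  have hbij : Function.Bijective f := by
    refine ⟨?_, ?_⟩
    · rintro ⟨q₁, h₁⟩ ⟨q₂, h₂⟩ heq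
      induction q₁ using Quotient.ind with | _ x => ?_
      induction q₂ using Quotient.ind with | _ y => ?_
      have hxy : r x y := Quotient.exact heq
      refine Subtype.ext (Quotient.sound ?_)
      by_cases hax : r a x
      · exact s.trans (s.symm (hside x hax h₁)) (hside y (r.trans hax hxy) h₂)
      · exact hout x y hax hxy
    · intro q
      induction q using Quotient.ind with | _ x => ?_
      by_cases hax : r a x
      · exact ⟨⟨⟦a⟧, fun h => hnab (Quotient.exact h)⟩, Quotient.sound hax⟩
      · refine ⟨⟨⟦x⟧, fun h => hax (r.trans hab (r.symm (hsr (Quotient.exact h))))⟩, rfl⟩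
  rw [← Nat.card_congr (Equiv.optionSubtypeNe (⟦b⟧ : Quotient s)), Finite.card_option,
    Nat.card_eq_of_bijective f hbij]

variable [DecidableEq α]

theorem sameCycle_swap_apply {f : Perm α} {a b : α} (hab : f.SameCycle a b) (z : α) :
    f.SameCycle z (swap a b z) := by
  rcases eq_or_ne z a with rfl | hza
  · rwa [swap_apply_left]
  rcases eq_or_ne z b with rfl | hzb
  · rw [swap_apply_right]; exact hab.symm
  · rw [swap_apply_of_ne_of_ne hza hzb]

theorem sameCycle_of_sameCycle_swap_mul [Finite α] {f : Perm α} {a b x y : α}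
    (hab : f.SameCycle a b) (h : (swap a b * f).SameCycle x y) : f.SameCycle x y :=
  sameCycle_of_forall_sameCycle_apply
    (fun z => (sameCycle_apply_right.mpr (SameCycle.refl f z)).trans (sameCycle_swap_apply hab _)) h

theorem sameCycle_swap_mul_of_not_sameCycle_left [Finite α] {f : Perm α} {a b x y : α}
    (ha : ¬ f.SameCycle x a) (hb : ¬ f.SameCycle x b) (h : f.SameCycle x y) :
    (swap a b * f).SameCycle x y := by
  refine (mem_of_sameCycle_of_mapsTo (s := {z | f.SameCycle x z ∧ (swap a b * f).SameCycle x z})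
    (fun z hz => ?_) ⟨SameCycle.refl f x, SameCycle.refl _ x⟩ h).2
  have hfz : f.SameCycle x (f z) := sameCycle_apply_right.mpr hz.1
  have hg : (swap a b * f) z = f z :=
    swap_apply_of_ne_of_ne (fun e => ha (e ▸ hfz)) (fun e => hb (e ▸ hfz))
  exact ⟨hfz, hg ▸ sameCycle_apply_right.mpr hz.2⟩

theorem sameCycle_swap_mul_or [Finite α] {f : Perm α} {a b x : α} (h : f.SameCycle a x) :
    (swap a b * f).SameCycle a x ∨ (swap a b * f).SameCycle b x := by
  set g := swap a b * f
  let s : Set α := {z | g.SameCycle a z ∨ g.SameCycle b z}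
  have hswap : ∀ z ∈ s, swap a b z ∈ s := fun z hz => by
    rcases eq_or_ne z a with hza | hza
    · rw [hza, swap_apply_left]; exact Or.inr (SameCycle.refl g b)
    rcases eq_or_ne z b with hzb | hzb
    · rw [hzb, swap_apply_right]; exact Or.inl (SameCycle.refl g a)
    · rwa [swap_apply_of_ne_of_ne hza hzb]
  have hf : f = swap a b * g := (swap_mul_self_mul a b f).symm
  refine mem_of_sameCycle_of_mapsTo (s := s) (fun z hz => ?_) (Or.inl (SameCycle.refl g a)) h
  rw [hf, Perm.mul_apply]
  exact hswap _ (hz.imp sameCycle_apply_right.mpr sameCycle_apply_right.mpr)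

theorem swap_mul_pow_apply_of_first_hit {f : Perm α} {a b x : α} {j : ℕ} (hj : 0 < j)
    (hjx : (f ^ j) x = a) (hfirst : ∀ i, 0 < i → i < j → (f ^ i) x ≠ a ∧ (f ^ i) x ≠ b) :
    (∀ i < j, ((swap a b * f) ^ i) x = (f ^ i) x) ∧ ((swap a b * f) ^ j) x = b := by
  have hstep : ∀ i, ((swap a b * f) ^ i) x = (f ^ i) x →
      ((swap a b * f) ^ (i + 1)) x = swap a b ((f ^ (i + 1)) x) := fun i hi => by
    rw [pow_succ', Perm.mul_apply, hi, Perm.mul_apply, pow_succ', Perm.mul_apply]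
  have hbefore : ∀ i < j, ((swap a b * f) ^ i) x = (f ^ i) x := by
    intro i hi
    induction i with
    | zero => rfl
    | succ i ih =>
      rw [hstep i (ih (by omega))]
      exact swap_apply_of_ne_of_ne (hfirst _ (by omega) hi).1 (hfirst _ (by omega) hi).2
  obtain ⟨i, rfl⟩ : ∃ i, j = i + 1 := ⟨j - 1, by omega⟩
  exact ⟨hbefore, by rw [hstep i (hbefore i (by omega)), hjx, swap_apply_left]⟩

theorem not_sameCycle_swap_mul [Finite α] {f : Perm α} {a b : α} (hab : a ≠ b)
    (h : f.SameCycle a b) : ¬ (swap a b * f).SameCycle a b := by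
  have hex : ∃ j, 0 < j ∧ (f ^ j) a = b :=
    let ⟨j, hj, _, hjb⟩ := h.exists_pow_eq''
    ⟨j, hj, hjb⟩
  obtain ⟨hj, hjb⟩ := Nat.find_spec hex
  have hfirst : ∀ i, 0 < i → i < Nat.find hex → (f ^ i) a ≠ b ∧ (f ^ i) a ≠ a := by
    refine fun i hi hij => ⟨fun e => Nat.find_min hex hij ⟨hi, e⟩, fun e => ?_⟩
    refine Nat.find_min hex (show Nat.find hex - i < Nat.find hex by omega) ⟨by omega, ?_⟩
    calc (f ^ (Nat.find hex - i)) a = (f ^ (Nat.find hex - i)) ((f ^ i) a) := by rw [e]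
      _ = b := by rw [← Perm.mul_apply, ← pow_add, Nat.sub_add_cancel hij.le, hjb]
  -- `swap a b * f` follows the `f`-orbit of `a` up to its first visit to `b`, where it returns
  -- to `a` instead; so its orbit of `a` misses `b`
  obtain ⟨hbefore, hreturn⟩ := swap_mul_pow_apply_of_first_hit hj hjb hfirst
  rw [swap_comm] at hbefore hreturn
  intro hsc
  obtain ⟨k, hk⟩ := hsc.exists_nat_pow_eq
  have hper : Function.IsPeriodicPt (swap a b * f) (Nat.find hex) a := by
    rw [Function.IsPeriodicPt, Function.IsFixedPt, ← coe_pow, hreturn]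
  have hmod : (f ^ (k % Nat.find hex)) a = b := by
    rw [← hbefore _ (Nat.mod_lt _ hj), coe_pow, hper.iterate_mod_apply, ← coe_pow, hk]
  have hpos : 0 < k % Nat.find hex :=
    Nat.pos_of_ne_zero fun h0 => hab (by rwa [h0, pow_zero, Perm.one_apply] at hmod)
  exact Nat.find_min hex (Nat.mod_lt _ hj) ⟨hpos, hmod⟩

theorem sameCycle_swap_mul_of_not_sameCycle [Finite α] {f : Perm α} {a b : α}
    (h : ¬ f.SameCycle a b) : (swap a b * f).SameCycle a b := by
  have hex : ∃ m, 0 < m ∧ (f ^ m) b = b :=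
    ⟨orderOf f, orderOf_pos f, by rw [pow_orderOf_eq_one, Perm.one_apply]⟩
  obtain ⟨hm, hmb⟩ := Nat.find_spec hex
  have hfirst : ∀ i, 0 < i → i < Nat.find hex → (f ^ i) b ≠ b ∧ (f ^ i) b ≠ a :=
    fun i hi him => ⟨fun e => Nat.find_min hex him ⟨hi, e⟩,
      fun e => h (SameCycle.symm ⟨i, by rw [zpow_natCast, e]⟩)⟩
  have hreturn := (swap_mul_pow_apply_of_first_hit hm hmb hfirst).2
  rw [swap_comm] at hreturn
  exact SameCycle.symm ⟨Nat.find hex, by rw [zpow_natCast, hreturn]⟩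

theorem numCycles_swap_mul_of_sameCycle [Finite α] {f : Perm α} {a b : α} (hab : a ≠ b)
    (h : f.SameCycle a b) : numCycles (swap a b * f) = numCycles f + 1 :=
  card_quotient_eq_add_one_of_split (fun _ _ => sameCycle_of_sameCycle_swap_mul h) h
    (not_sameCycle_swap_mul hab h) (fun _ => sameCycle_swap_mul_or)
    fun _ _ hax hxy => sameCycle_swap_mul_of_not_sameCycle_left (fun h' => hax h'.symm)
      (fun h' => hax (h.trans h'.symm)) hxy

theorem numCycles_swap_mul_of_not_sameCycle [Finite α] {f : Perm α} {a b : α}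
    (h : ¬ f.SameCycle a b) : numCycles (swap a b * f) + 1 = numCycles f := by
  have hab : a ≠ b := fun e => h (e ▸ SameCycle.refl f a)
  have := numCycles_swap_mul_of_sameCycle hab (sameCycle_swap_mul_of_not_sameCycle h)
  rwa [swap_mul_self_mul, eq_comm] at this

theorem card_le_numCycles_prod_add_length [Finite α] {l : List (Perm α)}
    (hl : ∀ σ ∈ l, σ.IsSwap) : Nat.card α ≤ numCycles l.prod + l.length := by
  induction l with
  | nil => simp [numCycles_one]
  | cons σ l ih =>
    obtain ⟨a, b, hab, rfl⟩ := hl σ List.mem_cons_self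
    have := ih fun τ hτ => hl τ (List.mem_cons_of_mem _ hτ)
    rw [List.prod_cons, List.length_cons]
    by_cases h : l.prod.SameCycle a b
    · have := numCycles_swap_mul_of_sameCycle hab h
      omega
    · have := numCycles_swap_mul_of_not_sameCycle h
      omega

theorem lenT_isSwap_add_numCycles_le [Finite α] (f : Perm α) :
    lenT {σ : Perm α | σ.IsSwap} f + numCycles f ≤ Nat.card α := by
  induction h : Nat.card α - numCycles f using Nat.strong_induction_on generalizing f with
  | _ k ih =>
    by_cases hf : f = 1
    · simp [hf, lenT_one, numCycles_one]
    obtain ⟨a, ha⟩ : ∃ a, f a ≠ a := not_forall.mp fun h => hf (Equiv.ext h)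
    set g := swap a (f a) * f
    have hg : numCycles g = numCycles f + 1 :=
      numCycles_swap_mul_of_sameCycle (Ne.symm ha) (sameCycle_apply_right.mpr (SameCycle.refl f a))
    have hle := numCycles_le g
    have hind := ih _ (by omega) g rfl
    have hmul := lenT_mul_le mclosure_isSwap (swap a (f a)) g
    rw [swap_mul_self_mul] at hmul
    have hsw := lenT_le_length (T := {σ : Perm α | σ.IsSwap}) (l := [swap a (f a)])
      (by simpa using ⟨a, f a, Ne.symm ha, rfl⟩)
    rw [List.prod_singleton, List.length_singleton] at hsw
    omega

theorem lenT_isSwap_add_numCycles [Finite α] (f : Perm α) :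
    lenT {σ : Perm α | σ.IsSwap} f + numCycles f = Nat.card α := by
  refine le_antisymm (lenT_isSwap_add_numCycles_le f) ?_
  obtain ⟨l, hl, hlen, rfl⟩ := exists_list_length_eq_lenT mclosure_isSwap f
  have := card_le_numCycles_prod_add_length hl
  omega

end Cycles

section Transpositions

open Equiv Equiv.Perm

variable {n : ℕ} {w : Perm (Fin n)} {a b : Fin n}

theorem closure_ST : Submonoid.closure (ST n) = ⊤ := mclosure_isSwap

theorem conj_mem_ST (g : Perm (Fin n)) : ∀ t ∈ ST n, g * t * g⁻¹ ∈ ST n := by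
  rintro t ⟨a, b, hab, rfl⟩
  exact ⟨g a, g b, g.injective.ne hab, (swap_apply_apply g a b).symm⟩

theorem lenT_add_numCycles (w : Perm (Fin n)) : lenT (ST n) w + numCycles w = n := by
  have := lenT_isSwap_add_numCycles w
  rwa [Nat.card_eq_fintype_card, Fintype.card_fin] at this

theorem lenT_swap_mul_of_sameCycle (hab : a ≠ b) (h : w.SameCycle a b) :
    lenT (ST n) (swap a b * w) + 1 = lenT (ST n) w := by
  have := numCycles_swap_mul_of_sameCycle hab h
  have := lenT_add_numCycles w
  have := lenT_add_numCycles (swap a b * w)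
  omega

theorem lenT_swap_mul_of_not_sameCycle (h : ¬ w.SameCycle a b) :
    lenT (ST n) (swap a b * w) = lenT (ST n) w + 1 := by
  have := numCycles_swap_mul_of_not_sameCycle h
  have := lenT_add_numCycles w
  have := lenT_add_numCycles (swap a b * w)
  omega

theorem lenT_mul_swap_of_sameCycle (hab : a ≠ b) (h : w.SameCycle a b) :
    lenT (ST n) (w * swap a b) + 1 = lenT (ST n) w := by
  rw [mul_swap_eq_swap_mul]
  exact lenT_swap_mul_of_sameCycle (w.injective.ne hab)
    (sameCycle_apply_left.mpr (sameCycle_apply_right.mpr h))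

theorem lenT_mul_swap_of_not_sameCycle (h : ¬ w.SameCycle a b) :
    lenT (ST n) (w * swap a b) = lenT (ST n) w + 1 := by
  rw [mul_swap_eq_swap_mul]
  exact lenT_swap_mul_of_not_sameCycle (by rwa [sameCycle_apply_left, sameCycle_apply_right])

theorem lenT_swap (hab : a ≠ b) : lenT (ST n) (swap a b) = 1 := by
  have := lenT_swap_mul_of_sameCycle hab (w := swap a b) ⟨1, by simp⟩
  rwa [swap_mul_self, lenT_one, zero_add, eq_comm] at this

theorem swap_absLe_iff_sameCycle (hab : a ≠ b) :
    absLe (ST n) (swap a b) w ↔ w.SameCycle a b := by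
  rw [absLe, swap_inv, lenT_swap hab]
  by_cases h : w.SameCycle a b
  · have := lenT_swap_mul_of_sameCycle hab h
    simp only [h, iff_true]
    omega
  · have := lenT_swap_mul_of_not_sameCycle h
    simp only [h, iff_false]
    omega

theorem mul_swap_absLe (hab : a ≠ b) (h : w.SameCycle a b) : absLe (ST n) (w * swap a b) w := by
  rw [absLe, mul_inv_rev, swap_inv, mul_assoc, inv_mul_cancel, mul_one, lenT_swap hab]
  exact (lenT_mul_swap_of_sameCycle hab h).symm

theorem sameCycle_finRotate (x y : Fin n) : (finRotate n).SameCycle x y := by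
  rcases lt_or_ge n 2 with hn | hn
  · obtain rfl : x = y := Fin.ext (by have := x.isLt; have := y.isLt; omega)
    exact SameCycle.refl _ x
  · have hsupp := support_finRotate_of_le hn
    exact (isCycle_finRotate_of_le hn).sameCycle (mem_support.mp (hsupp ▸ Finset.mem_univ x))
      (mem_support.mp (hsupp ▸ Finset.mem_univ y))

theorem lenT_finRotate : lenT (ST n) (finRotate n) = n - 1 := by
  have h := lenT_add_numCycles (finRotate n)
  rcases Nat.eq_zero_or_pos n with hn | hn
  · omega
  have : numCycles (finRotate n) = 1 := Nat.card_eq_one_iff_unique.mpr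
    ⟨⟨Quotient.ind fun x => Quotient.ind fun y => Quotient.sound (sameCycle_finRotate x y)⟩,
      ⟨⟦⟨0, hn⟩⟧⟩⟩
  omega

end Transpositions

section Circle

variable {n : ℕ}

/-- The number of steps `x ↦ x + 1` that lead from `a` to `x` around `Fin n`. -/
def offset (a x : Fin n) : ℕ := (x - a).val

theorem offset_cases (a x : Fin n) :
    (a.val ≤ x.val ∧ offset a x + a.val = x.val) ∨
      (x.val < a.val ∧ offset a x + a.val = x.val + n) := by
  have ha := a.isLt
  have hx := x.isLt
  rw [offset, Fin.val_sub]
  rcases le_or_gt a.val x.val with h | h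
  · rw [show n - a.val + x.val = (x.val - a.val) + n by omega, Nat.add_mod_right,
      Nat.mod_eq_of_lt (by omega)]
    omega
  · rw [Nat.mod_eq_of_lt (by omega)]
    omega

theorem offset_self (a : Fin n) : offset a a = 0 := by
  have := offset_cases a a
  omega

theorem offset_pos {a x : Fin n} (h : x ≠ a) : 0 < offset a x := by
  have := offset_cases a x
  have := Fin.val_ne_of_ne h
  omega

theorem eq_of_offset_eq {a x y : Fin n} (h : offset a x = offset a y) : x = y := by
  have := offset_cases a x
  have := offset_cases a y
  have := x.isLt
  have := y.isLt
  exact Fin.ext (by omega)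

/-- `x` lies on the arc `(p, q]` that runs from `p` to `q` in the direction of `x ↦ x + 1`. -/
def InArc (p q x : Fin n) : Prop := 0 < offset p x ∧ offset p x ≤ offset p q

variable {p q x y z : Fin n}

theorem not_inArc_left : ¬ InArc p q p := by
  simp [InArc, offset_self]

theorem inArc_right (hpq : p ≠ q) : InArc p q q :=
  ⟨offset_pos hpq.symm, le_rfl⟩

theorem not_inArc_iff (hpq : p ≠ q) : ¬ InArc p q x ↔ InArc q p x := by
  have := offset_cases p x
  have := offset_cases p q
  have := offset_cases q x
  have := offset_cases q p
  have := Fin.val_ne_of_ne hpq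
  unfold InArc
  omega

theorem InArc.of_inArc (hx : InArc p q x) (hz : InArc x q z) : InArc p q z := by
  have := offset_cases p x
  have := offset_cases p q
  have := offset_cases p z
  have := offset_cases x q
  have := offset_cases x z
  unfold InArc at *
  omega

theorem InArc.inArc_of_ne (hy : InArc p q y) (hyq : y ≠ q) (hz : InArc p y z) : InArc q y z := by
  have := offset_cases p q
  have := offset_cases p y
  have := offset_cases p z
  have := offset_cases q y
  have := offset_cases q z
  have := Fin.val_ne_of_ne hyq
  unfold InArc at *
  omega

theorem inArc_iff_of_alternating {a b : Fin n} (hab : InArc p q a ↔ InArc p q b)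
    (hxy : InArc p q x ↔ InArc p q y) (h₁ : 0 < offset a x) (h₂ : offset a x < offset a b)
    (h₃ : offset a b < offset a y) : InArc p q a ↔ InArc p q x := by
  have := offset_cases p q
  have := offset_cases p a
  have := offset_cases p b
  have := offset_cases p x
  have := offset_cases p y
  have := offset_cases a x
  have := offset_cases a b
  have := offset_cases a y
  unfold InArc at *
  omega

end Circle

section NoncrossingPermutations

open Equiv Equiv.Perm

variable {n : ℕ}

/-- Each cycle of `w` runs around the circle in the direction of `x ↦ x + 1`. -/
def CyclesIncreasing (w : Perm (Fin n)) : Prop :=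
  ∀ x y, w.SameCycle x y → y ≠ x → InArc x y (w x)

/-- Two cycles of `w` whose points alternate around the circle are the same cycle. -/
def CyclesNoncrossing (w : Perm (Fin n)) : Prop :=
  ∀ a b x y, w.SameCycle a b → w.SameCycle x y → 0 < offset a x → offset a x < offset a b →
    offset a b < offset a y → w.SameCycle a x

theorem CyclesNoncrossing.inArc_iff {w : Perm (Fin n)} (hN : CyclesNoncrossing w)
    {a b x y : Fin n} (hab : w.SameCycle a b) (hax : ¬ w.SameCycle a x) (hxy : w.SameCycle x y) :
    InArc a b x ↔ InArc a b y := by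
  have key : ∀ x y, ¬ w.SameCycle a x → w.SameCycle x y → InArc a b x → InArc a b y := by
    intro x y hax hxy hx
    by_contra hy
    have hxb : x ≠ b := fun e => hax (e ▸ hab)
    have hya : y ≠ a := fun e => hax (e ▸ hxy.symm)
    have := offset_pos hya
    have : offset a x ≠ offset a b := fun e => hxb (eq_of_offset_eq e)
    unfold InArc at hx hy
    exact hax (hN a b x y hab hxy hx.1 (by omega) (by omega))
  exact ⟨key x y hax hxy, key y x (fun h => hax (h.trans hxy.symm)) hxy.symm⟩

section Split

variable {v : Perm (Fin n)} {p q : Fin n}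

theorem sameCycle_mul_swap_apply (hsc : v.SameCycle p q) (z : Fin n) :
    v.SameCycle z ((v * swap p q) z) :=
  (sameCycle_swap_apply hsc z).trans (sameCycle_apply_right.mpr (SameCycle.refl v _))

theorem mapsTo_mul_swap (hA : CyclesIncreasing v) (hpq : p ≠ q) (hsc : v.SameCycle p q) :
    Set.MapsTo (v * swap p q) {z | v.SameCycle p z ∧ InArc p q z}
      {z | v.SameCycle p z ∧ InArc p q z} := by
  rintro x ⟨hpx, hx⟩
  refine ⟨hpx.trans (sameCycle_mul_swap_apply hsc x), ?_⟩
  have hxp : x ≠ p := fun e => not_inArc_left (e ▸ hx)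
  rcases eq_or_ne x q with rfl | hxq
  · rw [Perm.mul_apply, swap_apply_right]
    exact hA p x hsc hpq.symm
  · rw [Perm.mul_apply, swap_apply_of_ne_of_ne hxp hxq]
    exact hx.of_inArc (hA x q (hpx.symm.trans hsc) hxq.symm)

theorem sameCycle_mul_swap_of_inArc (hA : CyclesIncreasing v) (hpq : p ≠ q)
    (hsc : v.SameCycle p q) {x : Fin n} (hpx : v.SameCycle p x) (hx : InArc p q x) :
    (v * swap p q).SameCycle q x := by
  have hvp : (v * swap p q) q = v p := by rw [Perm.mul_apply, swap_apply_right]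
  have hvq : (v * swap p q) p = v q := by rw [Perm.mul_apply, swap_apply_left]
  have := sameCycle_swap_mul_or (b := v q) (sameCycle_apply_left.mpr hpx)
  rw [← mul_swap_eq_swap_mul] at this
  rcases this with h | h
  · rw [← hvp, sameCycle_apply_left] at h
    exact h
  · rw [← hvq, sameCycle_apply_left] at h
    exact absurd (mem_of_sameCycle_of_mapsTo (mapsTo_mul_swap hA hpq hsc) ⟨hpx, hx⟩ h.symm).2
      not_inArc_left

/-- Multiplying by `swap p q` cuts the cycle through `p` and `q` along the chord `p q`, into its
points on the arc `(p, q]` and the others. -/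
theorem sameCycle_mul_swap_iff (hA : CyclesIncreasing v) (hpq : p ≠ q) (hsc : v.SameCycle p q)
    {x y : Fin n} : (v * swap p q).SameCycle x y ↔
      v.SameCycle x y ∧ (v.SameCycle p x → (InArc p q x ↔ InArc p q y)) := by
  have hswap : v * swap q p = v * swap p q := by rw [swap_comm]
  constructor
  · intro h
    refine ⟨sameCycle_of_forall_sameCycle_apply (sameCycle_mul_swap_apply hsc) h, fun hpx => ?_⟩
    by_cases hx : InArc p q x
    · have := (mem_of_sameCycle_of_mapsTo (mapsTo_mul_swap hA hpq hsc) ⟨hpx, hx⟩ h).2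
      exact iff_of_true hx this
    · have hx' := (not_inArc_iff hpq).mp hx
      have := (mem_of_sameCycle_of_mapsTo (hswap ▸ mapsTo_mul_swap hA hpq.symm hsc.symm)
        ⟨hsc.symm.trans hpx, hx'⟩ h).2
      exact iff_of_false hx ((not_inArc_iff hpq).mpr this)
  · rintro ⟨hxy, harc⟩
    by_cases hpx : v.SameCycle p x
    · have hpy := hpx.trans hxy
      by_cases hx : InArc p q x
      · exact (sameCycle_mul_swap_of_inArc hA hpq hsc hpx hx).symm.trans
          (sameCycle_mul_swap_of_inArc hA hpq hsc hpy ((harc hpx).mp hx))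
      · have hy := (not_inArc_iff hpq).mp (mt (harc hpx).mpr hx)
        rw [← hswap]
        exact (sameCycle_mul_swap_of_inArc hA hpq.symm hsc.symm (hsc.symm.trans hpx)
          ((not_inArc_iff hpq).mp hx)).symm.trans
          (sameCycle_mul_swap_of_inArc hA hpq.symm hsc.symm (hsc.symm.trans hpy) hy)
    · rw [mul_swap_eq_swap_mul]
      refine sameCycle_swap_mul_of_not_sameCycle_left (fun h => hpx ?_) (fun h => hpx ?_) hxy
      · exact (sameCycle_apply_right.mp h).symm
      · exact hsc.trans (sameCycle_apply_right.mp h).symm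

theorem CyclesIncreasing.mul_swap (hA : CyclesIncreasing v) (hpq : p ≠ q)
    (hsc : v.SameCycle p q) : CyclesIncreasing (v * swap p q) := by
  intro x y hxy hyx
  obtain ⟨hxy', harc⟩ := (sameCycle_mul_swap_iff hA hpq hsc).mp hxy
  rcases eq_or_ne x q with rfl | hxq
  · have hy := (harc hsc).mp (inArc_right hpq)
    rw [Perm.mul_apply, swap_apply_right]
    exact hy.inArc_of_ne hyx (hA p y (hsc.trans hxy') fun e => not_inArc_left (e ▸ hy))
  rcases eq_or_ne x p with rfl | hxp
  · have hy := (not_inArc_iff hpq).mp (mt (harc (SameCycle.refl v x)).mpr not_inArc_left)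
    rw [Perm.mul_apply, swap_apply_left]
    exact hy.inArc_of_ne hyx
      (hA q y (hsc.symm.trans hxy') fun e => not_inArc_left (e ▸ hy))
  · rw [Perm.mul_apply, swap_apply_of_ne_of_ne hxp hxq]
    exact hA x y hxy' hyx

theorem CyclesNoncrossing.mul_swap (hA : CyclesIncreasing v) (hN : CyclesNoncrossing v)
    (hpq : p ≠ q) (hsc : v.SameCycle p q) : CyclesNoncrossing (v * swap p q) := by
  intro a b x y hab hxy h₁ h₂ h₃
  obtain ⟨hab', harc⟩ := (sameCycle_mul_swap_iff hA hpq hsc).mp hab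
  obtain ⟨hxy', hxarc⟩ := (sameCycle_mul_swap_iff hA hpq hsc).mp hxy
  have hax := hN a b x y hab' hxy' h₁ h₂ h₃
  refine (sameCycle_mul_swap_iff hA hpq hsc).mpr ⟨hax, fun hpa => ?_⟩
  exact inArc_iff_of_alternating (harc hpa) (hxarc (hpa.trans hax)) h₁ h₂ h₃

end Split

end NoncrossingPermutations

section BelowLongCycle

open Equiv Equiv.Perm

variable {n : ℕ}

theorem cyclesIncreasing_finRotate : CyclesIncreasing (finRotate n) := by
  intro x y _ hyx
  obtain ⟨m, rfl⟩ : ∃ m, n = m + 1 := ⟨n - 1, by have := x.isLt; omega⟩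
  have hval : (finRotate (m + 1) x : ℕ) = if x = Fin.last m then 0 else (x : ℕ) + 1 :=
    coe_finRotate x
  have := offset_cases x (finRotate (m + 1) x)
  have := offset_cases x y
  have := Fin.val_ne_of_ne hyx
  have := x.isLt
  have := y.isLt
  unfold InArc
  by_cases hx : x = Fin.last m
  · rw [if_pos hx] at hval
    have : x.val = m := by rw [hx, Fin.val_last]
    clear hx
    omega
  · rw [if_neg hx] at hval
    have : x.val ≠ m := fun h => hx (Fin.ext h)
    omega

theorem cyclesNoncrossing_finRotate : CyclesNoncrossing (finRotate n) :=
  fun a _ x _ _ _ _ _ _ => sameCycle_finRotate a x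

theorem cyclesIncreasing_and_noncrossing_of_absLe {v : Perm (Fin n)}
    (hv : absLe (ST n) v (finRotate n)) : CyclesIncreasing v ∧ CyclesNoncrossing v := by
  induction h : lenT (ST n) (finRotate n) - lenT (ST n) v using Nat.strong_induction_on
    generalizing v with
  | _ k ih =>
    rcases eq_or_ne v (finRotate n) with rfl | hne
    · exact ⟨cyclesIncreasing_finRotate, cyclesNoncrossing_finRotate⟩
    obtain ⟨_, ⟨a, b, hab, rfl⟩, hlen, hle⟩ := exists_mem_absLe_mul closure_ST hv hne
    have hsc : (v * swap a b).SameCycle a b := by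
      by_contra hns
      have := lenT_mul_swap_of_not_sameCycle hns
      rw [mul_swap_mul_self] at this
      omega
    have hbound : lenT (ST n) (v * swap a b) ≤ lenT (ST n) (finRotate n) := by
      unfold absLe at hle
      omega
    obtain ⟨hA, hN⟩ := ih _ (by omega) hle rfl
    rw [← mul_swap_mul_self a b v]
    exact ⟨hA.mul_swap hab hsc, hN.mul_swap hA hab hsc⟩

theorem sameCycle_mul_swap_of_forall_sameCycle {v u : Perm (Fin n)} (hvA : CyclesIncreasing v)
    (hvN : CyclesNoncrossing v) (huA : CyclesIncreasing u)
    (hvu : ∀ x y, v.SameCycle x y → u.SameCycle x y) {a : Fin n} (ha : v a ≠ a) {x y : Fin n}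
    (h : (v * swap a (v a)).SameCycle x y) : (u * swap a (v a)).SameCycle x y := by
  have hab : a ≠ v a := Ne.symm ha
  have hvsc : v.SameCycle a (v a) := sameCycle_apply_right.mpr (SameCycle.refl v a)
  obtain ⟨hxy, harc⟩ := (sameCycle_mul_swap_iff hvA hab hvsc).mp h
  refine (sameCycle_mul_swap_iff huA hab (hvu _ _ hvsc)).mpr ⟨hvu x y hxy, fun _ => ?_⟩
  by_cases hax : v.SameCycle a x
  · exact harc hax
  · exact hvN.inArc_iff hvsc hax hxy

/-- Cutting `v` and `u` along the same chord `a, v a` preserves refinement, because the cycles of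
`v` do not cross, and lowers both lengths by one. -/
theorem absLe_of_forall_sameCycle {v u : Perm (Fin n)} (hv : absLe (ST n) v (finRotate n))
    (hu : absLe (ST n) u (finRotate n)) (hvu : ∀ x y, v.SameCycle x y → u.SameCycle x y) :
    absLe (ST n) v u := by
  induction h : lenT (ST n) v using Nat.strong_induction_on generalizing v u with
  | _ k ih =>
    by_cases hv1 : v = 1
    · rw [hv1]
      exact one_absLe u
    obtain ⟨a, ha⟩ : ∃ a, v a ≠ a := not_forall.mp fun h => hv1 (Equiv.ext h)
    have hab : a ≠ v a := Ne.symm ha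
    have hvsc : v.SameCycle a (v a) := sameCycle_apply_right.mpr (SameCycle.refl v a)
    have husc := hvu _ _ hvsc
    have hv' := lenT_mul_swap_of_sameCycle hab hvsc
    have hu' := lenT_mul_swap_of_sameCycle hab husc
    obtain ⟨hvA, hvN⟩ := cyclesIncreasing_and_noncrossing_of_absLe hv
    have huA := (cyclesIncreasing_and_noncrossing_of_absLe hu).1
    refine absLe_of_absLe_mul_right closure_ST conj_mem_ST ?_ hv' hu'
    exact ih _ (by omega) (absLe_trans closure_ST (mul_swap_absLe hab hvsc) hv)
      (absLe_trans closure_ST (mul_swap_absLe hab husc) hu)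
      (fun x y => sameCycle_mul_swap_of_forall_sameCycle hvA hvN huA hvu ha) rfl

end BelowLongCycle

section Subwords

variable {m : ℕ}

open scoped Classical in
noncomputable def indicesIn (I : Set (Fin m)) : List (Fin m) :=
  (List.finRange m).filter fun i => decide (i ∈ I)

theorem mem_indicesIn {I : Set (Fin m)} {i : Fin m} : i ∈ indicesIn I ↔ i ∈ I := by
  simp [indicesIn]

theorem indicesIn_sublist_indicesIn {I J : Set (Fin m)} (hIJ : I ⊆ J) :
    (indicesIn I).Sublist (indicesIn J) :=
  List.monotone_filter_right _ fun i hi => by simpa using hIJ (by simpa using hi)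

theorem indicesIn_empty : indicesIn (∅ : Set (Fin m)) = [] := by
  simp [indicesIn]

theorem indicesIn_univ : indicesIn (Set.univ : Set (Fin m)) = List.finRange m := by
  simp [indicesIn]

theorem indicesIn_setOf_val_lt (k : ℕ) :
    indicesIn {i : Fin m | i.val < k} = (List.finRange m).take k := by
  unfold indicesIn
  conv_lhs => rw [← List.take_append_drop k (List.finRange m)]
  rw [List.filter_append, List.filter_eq_self.mpr, List.filter_eq_nil_iff.mpr, List.append_nil]
  · intro i hi
    obtain ⟨j, hj, rfl⟩ := List.mem_drop_iff_getElem.mp hi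
    simp
  · intro i hi
    obtain ⟨j, hj, rfl⟩ := List.mem_take_iff_getElem.mp hi
    simp only [List.getElem_finRange, Set.mem_ofPred_eq, decide_eq_true_eq, Fin.val_cast]
    omega

noncomputable def subwordProd (t : Fin m → G) (I : Set (Fin m)) : G :=
  ((indicesIn I).map t).prod

variable (t : Fin m → G)

theorem subwordProd_empty : subwordProd t ∅ = 1 := by
  simp [subwordProd, indicesIn_empty]

theorem subwordProd_univ : subwordProd t Set.univ = (List.ofFn t).prod := by
  rw [subwordProd, indicesIn_univ, List.ofFn_eq_map]

theorem subwordProd_setOf_val_lt (k : ℕ) :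
    subwordProd t {i | i.val < k} = ((List.ofFn t).take k).prod := by
  rw [subwordProd, indicesIn_setOf_val_lt, List.ofFn_eq_map, List.map_take]

variable {T : Set G} {t}

theorem lenT_subwordProd (hT : Submonoid.closure T = ⊤)
    (hconj : ∀ g, ∀ s ∈ T, g * s * g⁻¹ ∈ T) (ht : ∀ i, t i ∈ T)
    (hred : lenT T (List.ofFn t).prod = m) (I : Set (Fin m)) :
    lenT T (subwordProd t I) = (indicesIn I).length := by
  have hsub : ((indicesIn I).map t).Sublist (List.ofFn t) := by
    rw [List.ofFn_eq_map, ← indicesIn_univ]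
    exact (indicesIn_sublist_indicesIn (Set.subset_univ I)).map t
  have := (lenT_prod_eq_and_absLe_of_sublist hT hconj hsub (by simpa using ht)
    (by rw [hred, List.length_ofFn])).1
  rwa [List.length_map] at this

theorem subwordProd_absLe_subwordProd (hT : Submonoid.closure T = ⊤)
    (hconj : ∀ g, ∀ s ∈ T, g * s * g⁻¹ ∈ T) (ht : ∀ i, t i ∈ T)
    (hred : lenT T (List.ofFn t).prod = m)
    {I J : Set (Fin m)} (hIJ : I ⊆ J) :
    absLe T (subwordProd t I) (subwordProd t J) :=
  (lenT_prod_eq_and_absLe_of_sublist hT hconj ((indicesIn_sublist_indicesIn hIJ).map t)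
    (by simpa using fun i _ => ht i)
    (by rw [List.length_map]; exact lenT_subwordProd hT hconj ht hred J)).2

theorem absLe_subwordProd (hT : Submonoid.closure T = ⊤)
    (hconj : ∀ g, ∀ s ∈ T, g * s * g⁻¹ ∈ T) (ht : ∀ i, t i ∈ T)
    (hred : lenT T (List.ofFn t).prod = m)
    {I : Set (Fin m)} {i : Fin m} (hi : i ∈ I) :
    absLe T (t i) (subwordProd t I) := by
  have := (lenT_prod_eq_and_absLe_of_sublist hT hconj
    (List.singleton_sublist.mpr (List.mem_map_of_mem (f := t) (mem_indicesIn.mpr hi)))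
    (by simpa using fun i _ => ht i)
    (by rw [List.length_map]; exact lenT_subwordProd hT hconj ht hred I)).2
  rwa [List.prod_singleton] at this

theorem eq_of_subset_of_subwordProd_eq (hT : Submonoid.closure T = ⊤)
    (hconj : ∀ g, ∀ s ∈ T, g * s * g⁻¹ ∈ T) (ht : ∀ i, t i ∈ T)
    (hred : lenT T (List.ofFn t).prod = m)
    {I J : Set (Fin m)} (hIJ : I ⊆ J)
    (h : subwordProd t I = subwordProd t J) : I = J := by
  have hlen : (indicesIn I).length = (indicesIn J).length := by
    rw [← lenT_subwordProd hT hconj ht hred, ← lenT_subwordProd hT hconj ht hred, h]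
  have := (indicesIn_sublist_indicesIn hIJ).eq_of_length hlen
  ext i
  rw [← mem_indicesIn, this, mem_indicesIn]

end Subwords

theorem nonempty_relIso_range {α β : Type*} {f : α → β} (hf : Function.Injective f)
    {r : β → β → Prop} {s : α → α → Prop} (h : ∀ a b, r (f a) (f b) ↔ s a b) :
    Nonempty (RelIso (fun x y : Set.range f => r x y) s) := by
  refine ⟨⟨(Equiv.ofInjective f hf).symm, fun {x y} => ?_⟩⟩
  rw [← h, Equiv.apply_ofInjective_symm hf x, Equiv.apply_ofInjective_symm hf y]

section Factorization

open Equiv Equiv.Perm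

variable {n : ℕ} {t : Fin (n - 1) → Perm (Fin n)}

theorem isJoinIn_subwordProd (ht : ∀ i, (t i).IsSwap) (htc : (List.ofFn t).prod = finRotate n)
    (I : Set (Fin (n - 1))) :
    IsJoinIn (ST n) (NC (ST n) (finRotate n)) (t '' I) (subwordProd t I) := by
  have hred : lenT (ST n) (List.ofFn t).prod = n - 1 := by rw [htc, lenT_finRotate]
  have hle : absLe (ST n) (subwordProd t I) (finRotate n) := by
    rw [← htc, ← subwordProd_univ]
    exact subwordProd_absLe_subwordProd closure_ST conj_mem_ST ht hred (Set.subset_univ I)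
  refine ⟨hle, ?_, fun u hu hub => absLe_of_forall_sameCycle hle hu fun x y hxy => ?_⟩
  · rintro _ ⟨i, hi, rfl⟩
    exact absLe_subwordProd closure_ST conj_mem_ST ht hred hi
  · refine sameCycle_of_forall_sameCycle_apply (sameCycle_list_prod_apply ?_) hxy
    simp only [List.mem_map]
    rintro _ ⟨i, hi, rfl⟩
    obtain ⟨a, b, hab, hti⟩ := ht i
    have hub' := hub _ ⟨i, mem_indicesIn.mp hi, rfl⟩
    rw [hti] at hub' ⊢
    exact sameCycle_swap_apply ((swap_absLe_iff_sameCycle hab).mp hub')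

theorem subwordProd_absLe_subwordProd_iff (ht : ∀ i, (t i).IsSwap)
    (htc : (List.ofFn t).prod = finRotate n) {A B : Set (Fin (n - 1))} :
    absLe (ST n) (subwordProd t A) (subwordProd t B) ↔ A ⊆ B := by
  have hred : lenT (ST n) (List.ofFn t).prod = n - 1 := by rw [htc, lenT_finRotate]
  refine ⟨fun h => ?_, subwordProd_absLe_subwordProd closure_ST conj_mem_ST ht hred⟩
  have hjoin := (isJoinIn_subwordProd ht htc (A ∪ B)).2.2 _ (isJoinIn_subwordProd ht htc B).1 <| by
    rintro _ ⟨i, hi | hi, rfl⟩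
    · exact absLe_trans closure_ST (absLe_subwordProd closure_ST conj_mem_ST ht hred hi) h
    · exact absLe_subwordProd closure_ST conj_mem_ST ht hred hi
  have hBAB := Set.subset_union_right (s := A) (t := B)
  have heq := absLe_antisymm closure_ST
    (subwordProd_absLe_subwordProd closure_ST conj_mem_ST ht hred hBAB) hjoin
  rw [eq_of_subset_of_subwordProd_eq closure_ST conj_mem_ST ht hred hBAB heq]
  exact Set.subset_union_left

end Factorization

theorem boolean_sublattice_of_factorization_general (n : ℕ)
    (t : Fin (n-1) → Equiv.Perm (Fin n)) (ht : ∀ i, (t i).IsSwap)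
    (htc : (List.ofFn t).prod = finRotate n) :
    ∃ Wf : Set (Fin (n-1)) → Equiv.Perm (Fin n),
      (∀ I : Set (Fin (n-1)),
        IsJoinIn (ST n) (NC (ST n) (finRotate n)) (t '' I) (Wf I)) ∧
      Function.Injective Wf ∧
      (∀ I J : Set (Fin (n-1)), I ⊆ J → absLe (ST n) (Wf I) (Wf J)) ∧
      Wf ∅ = 1 ∧ Wf Set.univ = finRotate n ∧
      (∀ k : ℕ, 1 ≤ k → k ≤ n-1 →
        Wf {i : Fin (n-1) | i.val < k} = ((List.ofFn t).take k).prod) ∧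
      Nonempty (RelIso (fun a b : Set.range Wf => absLe (ST n) a.1 b.1)
        (fun A B : Set (Fin (n-1)) => A ⊆ B)) := by
  have hiff : ∀ A B, absLe (ST n) (subwordProd t A) (subwordProd t B) ↔ A ⊆ B :=
    fun _ _ => subwordProd_absLe_subwordProd_iff ht htc
  have hinj : Function.Injective (subwordProd t) := fun A B h =>
    ((hiff A B).mp (h ▸ absLe_refl _)).antisymm ((hiff B A).mp (h ▸ absLe_refl _))
  exact ⟨subwordProd t, isJoinIn_subwordProd ht htc, hinj, fun A B => (hiff A B).mpr,
    subwordProd_empty t, by rw [subwordProd_univ, htc], fun k _ _ => subwordProd_setOf_val_lt t k,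
    nonempty_relIso_range hinj hiff⟩

/-- for any factorization of the long cycle into `n-1` transpositions,
joins of subsets of the factors exist in `NC(S_n)`, the assignment `I ↦ w_I` is an
injective order-preserving map with `w_∅ = 1`, `w_univ = c`, sending initial segments
to partial products, and its image is order-isomorphic to the Boolean lattice of
subsets of an `(n-1)`-element set. -/
theorem boolean_sublattice_of_factorization (n : ℕ) (hn : 2 ≤ n)
    (t : Fin (n-1) → Equiv.Perm (Fin n)) (ht : ∀ i, (t i).IsSwap)
    (htc : (List.ofFn t).prod = finRotate n) :
    ∃ Wf : Set (Fin (n-1)) → Equiv.Perm (Fin n),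
      (∀ I : Set (Fin (n-1)),
        IsJoinIn (ST n) (NC (ST n) (finRotate n)) (t '' I) (Wf I)) ∧
      Function.Injective Wf ∧
      (∀ I J : Set (Fin (n-1)), I ⊆ J → absLe (ST n) (Wf I) (Wf J)) ∧
      Wf ∅ = 1 ∧ Wf Set.univ = finRotate n ∧
      (∀ k : ℕ, 1 ≤ k → k ≤ n-1 →
        Wf {i : Fin (n-1) | i.val < k} = ((List.ofFn t).take k).prod) ∧
      Nonempty (RelIso (fun a b : Set.range Wf => absLe (ST n) a.1 b.1)
        (fun A B : Set (Fin (n-1)) => A ⊆ B)) :=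
  boolean_sublattice_of_factorization_general n t ht htc

end NCPaper
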